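/- arXiv:2005.11667 — 8 statements merged into one kernel-verified Lean document; each statement's English description precedes it below -/
import Mathlib

section
/- The controllable subspace of the pair (A,B) is contained in the group-consensus subspace: for every natural number k and every u ∈ ℝ^M, the vector (A^k * B).mulVec u belongs to X_or. Consequently the span of the columns of the matrices B, A*B, A²*B, …, A^(N-1)*B is contained in X_or. -/
open Matrix

/-- The `N × N` permutation matrix of a permutation `σ` of `Fin N`, with the convention
`(permMat N σ).mulVec x i = x (σ⁻¹ i)`. -/
def permMat (N : ℕ) (σ : Equiv.Perm (Fin N)) : Matrix (Fin N) (Fin N) ℝ :=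
  Matrix.of fun i j => if σ j = i then (1 : ℝ) else 0

/-- The group-consensus subspace: vectors that are constant on each orbit of the natural
action of the subgroup `G` of permutations of `Fin N`. -/
def consensusSet (N : ℕ) (G : Subgroup (Equiv.Perm (Fin N))) : Set (Fin N → ℝ) :=
  {x | ∀ i j : Fin N, (∃ σ ∈ G, σ i = j) → x i = x j}

lemma permMat_mul_apply {N M : ℕ} (σ : Equiv.Perm (Fin N)) (C : Matrix (Fin N) (Fin M) ℝ)
    (i : Fin N) (j : Fin M) : (permMat N σ * C) i j = C (σ⁻¹ i) j := by
  simp only [Matrix.mul_apply, permMat, Matrix.of_apply]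
  rw [Finset.sum_eq_single (σ⁻¹ i)]
  · simp
  · intro b _ hb
    rw [if_neg, zero_mul]
    intro h
    exact hb (by simpa using congrArg σ.symm h)
  · simp

lemma consensus_submodule {N : ℕ} (G : Subgroup (Equiv.Perm (Fin N))) :
    ∃ S : Submodule ℝ (Fin N → ℝ), (S : Set (Fin N → ℝ)) = consensusSet N G := by
  refine ⟨{ carrier := consensusSet N G
            add_mem' := ?_
            zero_mem' := ?_
            smul_mem' := ?_ }, rfl⟩
  · intro a b ha hb i j h
    simp [ha i j h, hb i j h]
  · intro i j h; rfl
  · intro c x hx i j h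
    simp [hx i j h]

/-- The controllable subspace of the pair `(A, B)` is contained in the group-consensus
subspace: every vector `(A ^ k * B).mulVec u` lies in `X_or`, and consequently the span of the
columns of `B, A * B, …, A ^ (N - 1) * B` is contained in `X_or`. -/
theorem controllable_subspace_subset_consensus (N M : ℕ) (A : Matrix (Fin N) (Fin N) ℝ)
    (B : Matrix (Fin N) (Fin M) ℝ) (G : Subgroup (Equiv.Perm (Fin N)))
    (hA : ∀ σ ∈ G, permMat N σ * A = A * permMat N σ)
    (hB : ∀ σ ∈ G, permMat N σ * B = B) :
    (∀ (k : ℕ) (u : Fin M → ℝ), (A ^ k * B).mulVec u ∈ consensusSet N G) ∧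
      ∀ v ∈ Submodule.span ℝ
        {w : Fin N → ℝ | ∃ k < N, ∃ j : Fin M, w = fun i => (A ^ k * B) i j},
        v ∈ consensusSet N G := by
  have hpow : ∀ σ ∈ G, ∀ k : ℕ, permMat N σ * A ^ k = A ^ k * permMat N σ := by
    intro σ hσ k
    induction k with
    | zero => simp
    | succ n ih =>
      rw [pow_succ, ← mul_assoc, ih, mul_assoc, hA σ hσ, ← mul_assoc, ← pow_succ]
  have hfix : ∀ σ ∈ G, ∀ k : ℕ, permMat N σ * (A ^ k * B) = A ^ k * B := by
    intro σ hσ k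
    rw [← Matrix.mul_assoc, hpow σ hσ k, Matrix.mul_assoc, hB σ hσ]
  have hentry : ∀ σ ∈ G, ∀ k : ℕ, ∀ i : Fin N, ∀ j : Fin M,
      (A ^ k * B) (σ i) j = (A ^ k * B) i j := by
    intro σ hσ k i j
    have := congrFun (congrFun (hfix σ hσ k) (σ i)) j
    rw [permMat_mul_apply] at this
    simpa using this.symm
  have h1 : ∀ (k : ℕ) (u : Fin M → ℝ), (A ^ k * B).mulVec u ∈ consensusSet N G := by
    intro k u i j ⟨σ, hσ, hij⟩
    simp only [Matrix.mulVec, dotProduct]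
    subst hij
    exact Finset.sum_congr rfl fun l _ => by rw [hentry σ hσ k i l]
  refine ⟨h1, ?_⟩
  obtain ⟨S, hS⟩ := consensus_submodule (N := N) G
  intro v hv
  have : Submodule.span ℝ
      {w : Fin N → ℝ | ∃ k < N, ∃ j : Fin M, w = fun i => (A ^ k * B) i j} ≤ S := by
    rw [Submodule.span_le, hS]
    rintro w ⟨k, -, j, rfl⟩
    have := h1 k (Pi.single j 1)
    have heq : ((A ^ k * B).mulVec (Pi.single j 1)) = fun i => (A ^ k * B) i j := by
      funext i
      simp [Matrix.mulVec_single]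
    rwa [heq] at this
  rw [← hS]
  exact this hv
end

section
/- Let E be the N×K indicator matrix of the orbit partition (E i k = 1 if node i belongs to orbit k, and 0 otherwise), and note that Eᵀ * E is an invertible diagonal K×K matrix whose diagonal entries are the orbit sizes. Define the quotient matrix A_∥ := (Eᵀ * E)⁻¹ * Eᵀ * A * E. Then A * E = E * A_∥; that is, the action of A on vectors constant on orbits is exactly represented by the K×K quotient matrix A_∥. -/
/-
Commuting with the permutation matrices of `G` says that `A` is invariant under simultaneous
permutation of its rows and columns by `G`, while the rows of `E` are `G`-invariant. Hence each
row of `A * E` depends only on the orbit of its index, i.e. `A * E = E * B` for some `B`. As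
`Eᵀ * E` is diagonal with the (nonzero) orbit sizes on its diagonal, `(Eᵀ * E)⁻¹ * Eᵀ` is a left
inverse of `E`, and applying it to `A * E = E * B` identifies `B` with `A_∥`.
-/

open Matrix

theorem permMat_eq_toMatrix_toPEquiv {N : ℕ} (σ : Equiv.Perm (Fin N)) :
    permMat N σ = σ⁻¹.toPEquiv.toMatrix := by
  ext i j
  simp [permMat, Equiv.Perm.inv_def, Equiv.symm_apply_eq, @eq_comm _ i]

theorem submatrix_self_eq_of_permMat_mul_comm {N : ℕ} {A : Matrix (Fin N) (Fin N) ℝ}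
    {σ : Equiv.Perm (Fin N)} (h : permMat N σ * A = A * permMat N σ) :
    A.submatrix σ σ = A := by
  rw [permMat_eq_toMatrix_toPEquiv, PEquiv.toMatrix_toPEquiv_mul,
    PEquiv.mul_toMatrix_toPEquiv] at h
  simpa [submatrix_submatrix, Equiv.Perm.inv_def] using (congrArg (submatrix · σ id) h).symm

section PartitionMatrix

variable (R : Type*) {n m l : Type*} [DecidableEq m]

def partitionMatrix [Zero R] [One R] (c : n → m) : Matrix n m R :=
  of fun i k => if c i = k then 1 else 0

variable {R}

theorem partitionMatrix_mul [NonAssocSemiring R] [Fintype m] (c : n → m) (B : Matrix m l R) :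
    partitionMatrix R c * B = B.submatrix c id := by
  ext i j
  simp [partitionMatrix, mul_apply]

theorem transpose_partitionMatrix_mul_self [NonAssocSemiring R] [Fintype n] (c : n → m) :
    (partitionMatrix R c)ᵀ * partitionMatrix R c =
      diagonal fun k => ((Finset.univ.filter fun i => c i = k).card : R) := by
  ext k k'
  simp only [mul_apply, transpose_apply, partitionMatrix, of_apply, boole_mul, ← ite_and,
    diagonal_apply]
  split_ifs with hk
  · simp [hk, Finset.sum_boole]
  · exact Finset.sum_eq_zero fun j _ => if_neg fun h => hk (h.1.symm.trans h.2)

theorem exists_eq_partitionMatrix_mul [NonAssocSemiring R] [Fintype m] {c : n → m}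
    {M : Matrix n l R} (hM : ∀ i i', c i = c i' → M i = M i') :
    ∃ B : Matrix m l R, M = partitionMatrix R c * B := by
  classical
  refine ⟨of fun k => if h : ∃ i, c i = k then M h.choose else 0, ?_⟩
  ext i j
  have h : ∃ i', c i' = c i := ⟨i, rfl⟩
  rw [partitionMatrix_mul, submatrix_apply, of_apply, dif_pos h]
  exact congrFun (hM _ _ h.choose_spec.symm) j

theorem isUnit_det_transpose_partitionMatrix_mul_self [Field R] [CharZero R] [Fintype n]
    [Fintype m] {c : n → m} (hc : Function.Surjective c) :
    IsUnit ((partitionMatrix R c)ᵀ * partitionMatrix R c).det := by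
  rw [transpose_partitionMatrix_mul_self, det_diagonal, isUnit_iff_ne_zero,
    Finset.prod_ne_zero_iff]
  intro k _
  obtain ⟨i, rfl⟩ := hc k
  exact Nat.cast_ne_zero.mpr (Finset.card_ne_zero.mpr ⟨i, by simp⟩)

theorem partitionMatrix_mul_inv_mul_transpose_mul [Field R] [CharZero R] [Fintype n]
    [Fintype m] {c : n → m} (hc : Function.Surjective c) {M : Matrix n l R}
    (hM : ∀ i i', c i = c i' → M i = M i') :
    partitionMatrix R c * (((partitionMatrix R c)ᵀ * partitionMatrix R c)⁻¹ *
      (partitionMatrix R c)ᵀ * M) = M := by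
  obtain ⟨B, rfl⟩ := exists_eq_partitionMatrix_mul hM
  set P : Matrix n m R := partitionMatrix R c
  rw [Matrix.mul_assoc _ _ (P * B), ← Matrix.mul_assoc Pᵀ, ← Matrix.mul_assoc (Pᵀ * P)⁻¹,
    nonsing_inv_mul _ (isUnit_det_transpose_partitionMatrix_mul_self hc), Matrix.one_mul]

theorem mul_partitionMatrix_row_eq_of_orbits [NonAssocSemiring R] [Fintype n]
    {G : Subgroup (Equiv.Perm n)} {A : Matrix n n R} (hA : ∀ σ ∈ G, A.submatrix σ σ = A)
    {c : n → m} (hc : ∀ i j, (∃ σ ∈ G, σ i = j) ↔ c i = c j) (i i' : n) (hii' : c i = c i') :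
    (A * partitionMatrix R c) i = (A * partitionMatrix R c) i' := by
  obtain ⟨σ, hσ, rfl⟩ := (hc i i').mpr hii'
  have hP : (partitionMatrix R c).submatrix σ id = partitionMatrix R c := by
    ext j k
    simp [partitionMatrix, (hc j (σ j)).mp ⟨σ, hσ, rfl⟩]
  have hAP : (A * partitionMatrix R c).submatrix σ id = A * partitionMatrix R c := by
    rw [← submatrix_mul_equiv _ _ _ σ, hA σ hσ, hP]
  exact (congrFun hAP i).symm

end PartitionMatrix

/-- Let `E` be the indicator matrix of the orbit partition of `Fin N` into `K` nonempty
clusters (encoded by the surjective cluster map `c : Fin N → Fin K` whose fibers are exactly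
the `G`-orbits).  With the quotient matrix `A_∥ = (Eᵀ * E)⁻¹ * Eᵀ * A * E`, one has
`A * E = E * A_∥`. -/
theorem quotient_matrix_represents_A (N K : ℕ) (A : Matrix (Fin N) (Fin N) ℝ)
    (G : Subgroup (Equiv.Perm (Fin N)))
    (hA : ∀ σ ∈ G, permMat N σ * A = A * permMat N σ)
    (c : Fin N → Fin K)
    (hc : ∀ i j : Fin N, (∃ σ ∈ G, σ i = j) ↔ c i = c j)
    (hsurj : Function.Surjective c)
    (E : Matrix (Fin N) (Fin K) ℝ)
    (hE : ∀ (i : Fin N) (k : Fin K), E i k = if c i = k then 1 else 0) :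
    A * E = E * ((Eᵀ * E)⁻¹ * Eᵀ * A * E) := by
  obtain rfl : E = partitionMatrix ℝ c := Matrix.ext hE
  have hAE := mul_partitionMatrix_row_eq_of_orbits
    (fun σ hσ => submatrix_self_eq_of_permMat_mul_comm (hA σ hσ)) hc
  rw [Matrix.mul_assoc _ A]
  exact (partitionMatrix_mul_inv_mul_transpose_mul hsurj hAE).symm
end

section
/- Suppose u : ℝ → ℝ^M is continuous, x : ℝ → ℝ^N satisfies, for every t ∈ ℝ, that x has derivative A.mulVec (x t) + B.mulVec (u t) at t, and the initial condition lies on the group-consensus subspace: x 0 ∈ X_or. Then x t ∈ X_or for every t ∈ ℝ. In particular, no state with nonzero component orthogonal to X_or is reachable from an initial condition in X_or, whatever the control input. -/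
/-!
Each `σ ∈ G` acts by a permutation matrix `P` that commutes with `A` and fixes the columns of `B`,
so `P ∘ x` solves the same equation `ẋ = A x + B u` as `x`. The right-hand side is globally
Lipschitz in the state, so solutions are determined by their value at `t = 0`; as `P (x 0) = x 0`,
we get `P (x t) = x t` for all `t`. Finally, `X_or` is exactly the common fixed space of these
permutation matrices.
-/

open Matrix

theorem permMat_eq_permMatrix (N : ℕ) (σ : Equiv.Perm (Fin N)) :
    permMat N σ = (σ⁻¹).permMatrix ℝ := by
  ext i j
  simp [permMat, PEquiv.toMatrix_apply, Equiv.symm_apply_eq, @eq_comm _ i]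

theorem permMat_mulVec (N : ℕ) (σ : Equiv.Perm (Fin N)) (v : Fin N → ℝ) :
    permMat N σ *ᵥ v = v ∘ ⇑σ⁻¹ := by
  rw [permMat_eq_permMatrix, permMatrix_mulVec]

theorem mem_consensusSet_iff {N : ℕ} {G : Subgroup (Equiv.Perm (Fin N))} {v : Fin N → ℝ} :
    v ∈ consensusSet N G ↔ ∀ σ ∈ G, permMat N σ *ᵥ v = v := by
  simp only [permMat_mulVec, funext_iff, Function.comp_apply]
  constructor
  · intro hv σ hσ i
    exact hv (σ⁻¹ i) i ⟨σ, hσ, σ.apply_symm_apply i⟩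
  · rintro hv i _ ⟨σ, hσ, rfl⟩
    simpa using hv σ hσ (σ i)

theorem apply_eq_self_of_hasDerivAt_of_commute {E : Type*} [NormedAddCommGroup E]
    [NormedSpace ℝ E] (L P : E →L[ℝ] E) (f : ℝ → E)
    (hLP : ∀ y, P (L y) = L (P y)) (hf : ∀ t, P (f t) = f t)
    (x : ℝ → E) (hx : ∀ t, HasDerivAt x (L (x t) + f t) t) {t₀ : ℝ} (hx₀ : P (x t₀) = x t₀) :
    ∀ t, P (x t) = x t := by
  have hPx : ∀ t, HasDerivAt (P ∘ x) (L (P (x t)) + f t) t := fun t ↦ by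
    simpa only [map_add, hLP, hf] using P.hasFDerivAt.comp_hasDerivAt t (hx t)
  have hlip : ∀ t, LipschitzOnWith ‖L‖₊ (fun y ↦ L y + f t) Set.univ := fun t ↦
    (LipschitzWith.of_dist_le_mul fun y z ↦ by
      simpa only [dist_add_right] using L.lipschitz.dist_le_mul y z).lipschitzOnWith
  exact congrFun <| ODE_solution_unique_univ hlip (fun t ↦ ⟨hPx t, trivial⟩)
    (fun t ↦ ⟨hx t, trivial⟩) hx₀

theorem trajectory_stays_in_consensus_general (N M : ℕ) (A : Matrix (Fin N) (Fin N) ℝ)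
    (B : Matrix (Fin N) (Fin M) ℝ) (G : Subgroup (Equiv.Perm (Fin N)))
    (hA : ∀ σ ∈ G, permMat N σ * A = A * permMat N σ)
    (hB : ∀ σ ∈ G, permMat N σ * B = B)
    (u : ℝ → Fin M → ℝ)
    (x : ℝ → Fin N → ℝ)
    (hx : ∀ t : ℝ, HasDerivAt x (A.mulVec (x t) + B.mulVec (u t)) t)
    (hx0 : x 0 ∈ consensusSet N G) :
    ∀ t : ℝ, x t ∈ consensusSet N G := by
  intro t
  rw [mem_consensusSet_iff] at hx0 ⊢
  intro σ hσ
  exact apply_eq_self_of_hasDerivAt_of_commute A.mulVecLin.toContinuousLinearMap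
    (permMat N σ).mulVecLin.toContinuousLinearMap (fun s ↦ B *ᵥ u s)
    (fun y ↦ by simp [mulVec_mulVec, hA σ hσ]) (fun s ↦ by simp [mulVec_mulVec, hB σ hσ])
    x hx (hx0 σ hσ) t

/-- If `u` is continuous, `x` solves `ẋ = Ax + Bu` on all of `ℝ`, and `x 0 ∈ X_or`, then
`x t ∈ X_or` for every `t`: no state with nonzero component orthogonal to `X_or` is reachable
from an initial condition in `X_or`, whatever the control input. -/
theorem trajectory_stays_in_consensus (N M : ℕ) (A : Matrix (Fin N) (Fin N) ℝ)
    (B : Matrix (Fin N) (Fin M) ℝ) (G : Subgroup (Equiv.Perm (Fin N)))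
    (hA : ∀ σ ∈ G, permMat N σ * A = A * permMat N σ)
    (hB : ∀ σ ∈ G, permMat N σ * B = B)
    (u : ℝ → Fin M → ℝ) (hu : Continuous u)
    (x : ℝ → Fin N → ℝ)
    (hx : ∀ t : ℝ, HasDerivAt x (A.mulVec (x t) + B.mulVec (u t)) t)
    (hx0 : x 0 ∈ consensusSet N G) :
    ∀ t : ℝ, x t ∈ consensusSet N G :=
  trajectory_stays_in_consensus_general N M A B G hA hB u x hx hx0
end

section
/- Let λ ∈ ℝ, let Ω be a linear subspace of ℝ^N contained in the λ-eigenspace of A (so A.mulVec v = λ • v for all v ∈ Ω), and let D be a real N×W matrix with columns D_1, …, D_W. If every nonzero v ∈ Ω satisfies ⟪v, D_j⟫ ≠ 0 for at least one column index j (the Popov–Belevitch–Hautus controllability condition for λ restricted to Ω), then W ≥ dim Ω. Hence the number of independent input signals needed to make λ a controllable eigenvalue is at least the dimension of Ω. -/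
open Matrix

/-- PBH bound on the number of inputs: if `Ω` is a subspace of the `λ`-eigenspace of `A` and
every nonzero `v ∈ Ω` has nonzero inner product with some column of the `N × W` matrix `D`,
then `W ≥ dim Ω`. -/
theorem num_inputs_lower_bound (N W : ℕ) (A : Matrix (Fin N) (Fin N) ℝ) (lam : ℝ)
    (Ω : Submodule ℝ (Fin N → ℝ))
    (hΩ : ∀ v ∈ Ω, A.mulVec v = lam • v)
    (D : Matrix (Fin N) (Fin W) ℝ)
    (hPBH : ∀ v ∈ Ω, v ≠ 0 → ∃ j : Fin W, ∑ i, v i * D i j ≠ 0) :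
    Module.finrank ℝ Ω ≤ W := by
  let f : Ω →ₗ[ℝ] (Fin W → ℝ) :=
    { toFun := fun v j => ∑ i, (v : Fin N → ℝ) i * D i j
      map_add' := by
        intro v w
        funext j
        simp [add_mul, Finset.sum_add_distrib]
      map_smul' := by
        intro c v
        funext j
        simp [Finset.mul_sum, mul_assoc] }
  have hinj : Function.Injective f := by
    rw [← LinearMap.ker_eq_bot, LinearMap.ker_eq_bot']
    intro v hv
    by_contra h
    obtain ⟨j, hj⟩ := hPBH v v.2 (fun h0 => h (Subtype.ext h0))
    exact hj (congrFun hv j)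
  calc Module.finrank ℝ Ω ≤ Module.finrank ℝ (Fin W → ℝ) :=
        LinearMap.finrank_le_finrank_of_injective hinj
    _ = W := by simp
end

section
/- Let D be a nonzero real N×W matrix each of whose columns sums to zero (Σ_i D i j = 0 for every column index j). Then the number of nonzero rows of D (indices i such that the row fun j => D i j is not identically zero) is at least rank(D) + 1. -/
/-!
The rows of `D` sum to zero, so its nonzero rows (there is at least one) are linearly dependent
and hence span a space of dimension less than their number. That space is the row space of `D`,
whose dimension is `rank D`.
-/

open Module Submodule Set Function

theorem finrank_span_range_lt_card_of_sum_eq_zero {K V ι : Type*} [DivisionRing K]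
    [AddCommGroup V] [Module K V] [Fintype ι] [Nonempty ι] {v : ι → V} (hv : ∑ i, v i = 0) :
    finrank K (span K (range v)) < Fintype.card ι := by
  have hdep : ¬LinearIndependent K v := Fintype.not_linearIndependent_iff.mpr
    ⟨fun _ ↦ 1, by simpa using hv, Classical.arbitrary ι, one_ne_zero⟩
  rwa [linearIndependent_iff_card_le_finrank_span, not_le] at hdep

theorem Submodule.span_image_support {R M ι : Type*} [Semiring R] [AddCommMonoid M]
    [Module R M] (v : ι → M) : span R (v '' support v) = span R (range v) :=
  le_antisymm (span_mono (image_subset_range _ _)) <| by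
    rw [← span_insert_zero (s := v '' support v)]
    exact span_mono (range_subset_insert_image_support v)

theorem Matrix.rank_lt_card_support_row {m n K : Type*} [Fintype m] [Fintype n] [Field K]
    {A : Matrix m n K} (hA : A ≠ 0) (hsum : ∑ i, A.row i = 0) :
    A.rank < Nat.card (support A.row) := by
  classical
  have : Nonempty (support A.row) := (support_nonempty_iff.mpr hA).to_subtype
  have hsum_support : ∑ i : support A.row, A.row i = 0 := by
    rwa [← Finset.sum_congr_set _ A.row _ (fun _ _ ↦ rfl) fun _ ↦ notMem_support.mp]
  rw [rank_eq_finrank_span_row, ← span_image_support, image_eq_range, Nat.card_eq_fintype_card]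
  exact finrank_span_range_lt_card_of_sum_eq_zero hsum_support

open scoped Classical in
/-- If `D` is a nonzero `N × W` real matrix each of whose columns sums to zero, then the
number of nonzero rows of `D` is at least `rank D + 1`. -/
theorem nonzero_rows_ge_rank_succ (N W : ℕ) (D : Matrix (Fin N) (Fin W) ℝ)
    (hD : D ≠ 0) (hcol : ∀ j : Fin W, ∑ i, D i j = 0) :
    D.rank + 1 ≤ (Finset.univ.filter fun i : Fin N => ∃ j : Fin W, D i j ≠ 0).card := by
  have hsum : ∑ i, D.row i = 0 := funext fun j ↦ by simpa [Finset.sum_apply] using hcol j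
  have hcard : Nat.card (support D.row) = (Finset.univ.filter fun i => ∃ j, D i j ≠ 0).card := by
    simp [Nat.card_eq_fintype_card, Fintype.card_subtype, Function.ne_iff]
  exact hcard ▸ Matrix.rank_lt_card_support_row hD hsum
end

section
/- Let λ ∈ ℝ, let Ω be a nontrivial linear subspace of ℝ^N contained in the λ-eigenspace of A, and let D be a real N×W matrix each of whose columns sums to zero (Σ_i D i j = 0 for all j). If every nonzero v ∈ Ω satisfies ⟪v, D_j⟫ ≠ 0 for some column index j, then the number of nonzero rows of D (the number of driver nodes) is at least dim Ω + 1. -/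
open Matrix

open scoped Classical in
/-- If `Ω` is a nontrivial subspace of the `λ`-eigenspace of `A`, `D` has zero-sum columns,
and every nonzero `v ∈ Ω` has nonzero inner product with some column of `D`, then the number
of nonzero rows of `D` (the number of driver nodes) is at least `dim Ω + 1`. -/
theorem num_drivers_lower_bound (N W : ℕ) (A : Matrix (Fin N) (Fin N) ℝ) (lam : ℝ)
    (Ω : Submodule ℝ (Fin N → ℝ)) (hΩne : Ω ≠ ⊥)
    (hΩ : ∀ v ∈ Ω, A.mulVec v = lam • v)
    (D : Matrix (Fin N) (Fin W) ℝ)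
    (hcol : ∀ j : Fin W, ∑ i, D i j = 0)
    (hPBH : ∀ v ∈ Ω, v ≠ 0 → ∃ j : Fin W, ∑ i, v i * D i j ≠ 0) :
    Module.finrank ℝ Ω + 1 ≤
      (Finset.univ.filter fun i : Fin N => ∃ j : Fin W, D i j ≠ 0).card := by
  classical
  set S := Finset.univ.filter fun i : Fin N => ∃ j : Fin W, D i j ≠ 0 with hSdef
  have hzero : ∀ i : Fin N, i ∉ S → ∀ j, D i j = 0 := by
    intro i hi j
    by_contra h
    exact hi (Finset.mem_filter.mpr ⟨Finset.mem_univ _, ⟨j, h⟩⟩)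
  have hsum : ∀ (v : Fin N → ℝ) (j : Fin W), ∑ i, v i * D i j = ∑ i ∈ S, v i * D i j := by
    intro v j
    symm
    apply Finset.sum_subset (Finset.subset_univ S)
    intro i _ hi
    rw [hzero i hi j, mul_zero]
  obtain ⟨v0, hv0Ω, hv0ne⟩ : ∃ v ∈ Ω, v ≠ 0 := by
    rcases Submodule.exists_mem_ne_zero_of_ne_bot hΩne with ⟨v, hv, hne⟩
    exact ⟨v, hv, hne⟩
  obtain ⟨j0, hj0⟩ := hPBH v0 hv0Ω hv0ne
  have hSne : S.Nonempty := by
    rw [hsum] at hj0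
    rcases Finset.exists_ne_zero_of_sum_ne_zero hj0 with ⟨i, hiS, _⟩
    exact ⟨i, hiS⟩
  let L : (Ω × ℝ) →ₗ[ℝ] ({i // i ∈ S} → ℝ) :=
    { toFun := fun p i => (p.1 : Fin N → ℝ) i.1 + p.2
      map_add' := by intro p q; funext i; simp; ring
      map_smul' := by intro c p; funext i; simp [mul_add] }
  have hinj : Function.Injective L := by
    rw [← LinearMap.ker_eq_bot, LinearMap.ker_eq_bot']
    rintro ⟨v, c⟩ h
    have hvS : ∀ i ∈ S, (v : Fin N → ℝ) i = -c := by
      intro i hi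
      have := congrFun h ⟨i, hi⟩
      simp only [L, LinearMap.coe_mk, AddHom.coe_mk, Pi.zero_apply] at this
      linarith
    have hv0 : (v : Fin N → ℝ) = 0 := by
      by_contra hne
      obtain ⟨j, hj⟩ := hPBH v v.2 hne
      apply hj
      rw [hsum]
      have hDS : ∑ i ∈ S, D i j = ∑ i, D i j := by
        apply Finset.sum_subset (Finset.subset_univ S)
        intro i _ hi
        exact hzero i hi j
      calc ∑ i ∈ S, (v : Fin N → ℝ) i * D i j = ∑ i ∈ S, (-c) * D i j := by
             apply Finset.sum_congr rfl; intro i hi; rw [hvS i hi]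
        _ = (-c) * ∑ i ∈ S, D i j := by rw [Finset.mul_sum]
        _ = 0 := by rw [hDS, hcol j, mul_zero]
    have hc : c = 0 := by
      obtain ⟨i0, hi0⟩ := hSne
      have := hvS i0 hi0
      rw [hv0] at this
      simpa using this.symm
    have hvz : v = 0 := by
      ext i; exact congrFun hv0 i
    rw [hvz, hc]; rfl
  have h1 := LinearMap.finrank_le_finrank_of_injective hinj
  rw [Module.finrank_prod, Module.finrank_self,
    Module.finrank_fintype_fun_eq_card, Fintype.card_coe] at h1
  exact h1
end

section
/- Let the index set Fin N be partitioned into K pairwise disjoint nonempty clusters C_1, …, C_K. For each cluster index j, let Ω^j be a linear subspace of ℝ^N consisting of vectors supported on C_j (v ∈ Ω^j and i ∉ C_j imply v i = 0), with each Ω^j contained in some eigenspace of A. Let D be a real N×W matrix whose columns have zero sum within every cluster: Σ_{i ∈ C_l} D i j' = 0 for every cluster l and every column j'. Suppose that for every j with Ω^j ≠ {0} and every nonzero v ∈ Ω^j there exists a column index j' with ⟪v, D_{j'}⟫ ≠ 0. Then the number of nonzero rows of D is at least Σ over those j with Ω^j ≠ {0} of (dim Ω^j + 1). -/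
open Matrix

open scoped Classical in
/-- Cluster-wise driver-node bound: if `Fin N` is partitioned into `K` pairwise disjoint
nonempty clusters `C k`, each `Ω k` is a subspace of an eigenspace of `A` supported on `C k`,
the columns of `D` have zero sum within every cluster, and every nonzero `v` in a nontrivial
`Ω k` has nonzero inner product with some column of `D`, then the number of nonzero rows of
`D` is at least `Σ_{k : Ω k ≠ ⊥} (dim (Ω k) + 1)`. -/
theorem clusterwise_driver_bound (N K W : ℕ) (A : Matrix (Fin N) (Fin N) ℝ)
    (C : Fin K → Finset (Fin N))
    (hne : ∀ k, (C k).Nonempty)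
    (hdisj : ∀ k l, k ≠ l → Disjoint (C k) (C l))
    (hcover : ∀ i : Fin N, ∃ k, i ∈ C k)
    (Ω : Fin K → Submodule ℝ (Fin N → ℝ))
    (hsupp : ∀ k, ∀ v ∈ Ω k, ∀ i ∉ C k, v i = 0)
    (heig : ∀ k, ∃ lam : ℝ, ∀ v ∈ Ω k, A.mulVec v = lam • v)
    (D : Matrix (Fin N) (Fin W) ℝ)
    (hcol : ∀ (l : Fin K) (j' : Fin W), ∑ i ∈ C l, D i j' = 0)
    (hPBH : ∀ k, Ω k ≠ ⊥ → ∀ v ∈ Ω k, v ≠ 0 → ∃ j' : Fin W, ∑ i, v i * D i j' ≠ 0) :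
    ∑ k ∈ Finset.univ.filter (fun k : Fin K => Ω k ≠ ⊥), (Module.finrank ℝ (Ω k) + 1) ≤
      (Finset.univ.filter fun i : Fin N => ∃ j : Fin W, D i j ≠ 0).card := by
  classical
  set S : Fin K → Finset (Fin N) :=
    fun k => (C k).filter (fun i => ∃ j : Fin W, D i j ≠ 0) with hSdef
  -- sum over S k of any column is zero
  have hScolsum : ∀ k (j' : Fin W), ∑ i ∈ S k, D i j' = 0 := by
    intro k j'
    rw [← hcol k j']
    apply Finset.sum_subset (Finset.filter_subset _ _)
    intro i hi hiS
    simp only [hSdef, Finset.mem_filter, not_and, not_exists, not_not] at hiS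
    exact hiS hi j'
  -- inner product reduces to sum over S k
  have hinner : ∀ k, ∀ w ∈ Ω k, ∀ j' : Fin W,
      ∑ i, w i * D i j' = ∑ i ∈ S k, w i * D i j' := by
    intro k w hw j'
    have h1 : ∑ i, w i * D i j' = ∑ i ∈ C k, w i * D i j' := by
      symm
      apply Finset.sum_subset (Finset.subset_univ _)
      intro i _ hi
      rw [hsupp k w hw i hi, zero_mul]
    rw [h1]
    symm
    apply Finset.sum_subset (Finset.filter_subset _ _)
    intro i hi hiS
    simp only [hSdef, Finset.mem_filter, not_and, not_exists, not_not] at hiS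
    rw [hiS hi j', mul_zero]
  have key : ∀ k, Ω k ≠ ⊥ → Module.finrank ℝ (Ω k) + 1 ≤ (S k).card := by
    intro k hk
    obtain ⟨v, hv, hvne⟩ := (Submodule.ne_bot_iff _).1 hk
    obtain ⟨j0, hj0⟩ := hPBH k hk v hv hvne
    have hSne : (S k).Nonempty := by
      obtain ⟨i, _, hi⟩ := Finset.exists_ne_zero_of_sum_ne_zero hj0
      have hvi : v i ≠ 0 := fun h => hi (by rw [h, zero_mul])
      have hDi : D i j0 ≠ 0 := fun h => hi (by rw [h, mul_zero])
      have hiC : i ∈ C k := by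
        by_contra hiC
        exact hvi (hsupp k v hv i hiC)
      exact ⟨i, Finset.mem_filter.2 ⟨hiC, j0, hDi⟩⟩
    obtain ⟨i0, hi0⟩ := hSne
    set u : Fin N → ℝ := fun i => if i ∈ S k then (1 : ℝ) else 0 with hudef
    have hune : u ≠ 0 := by
      intro h
      have := congrFun h i0
      simp [hudef, hi0] at this
    have huNot : u ∉ Ω k := by
      intro hu
      obtain ⟨j', hj'⟩ := hPBH k hk u hu hune
      apply hj'
      rw [hinner k u hu j']
      have he : ∀ i ∈ S k, u i * D i j' = D i j' := fun i hi => by simp [hudef, hi]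
      rw [Finset.sum_congr rfl he, hScolsum]
    set M : Submodule ℝ (Fin N → ℝ) := Ω k ⊔ (ℝ ∙ u) with hMdef
    have hlt : Ω k < M := by
      refine lt_of_le_of_ne le_sup_left ?_
      intro h
      exact huNot (h ▸ Submodule.mem_sup_right (Submodule.mem_span_singleton_self u))
    have h1 : Module.finrank ℝ (Ω k) + 1 ≤ Module.finrank ℝ M :=
      Submodule.finrank_lt_finrank_of_lt hlt
    refine h1.trans ?_
    -- restriction map to S k
    set Φ : (Fin N → ℝ) →ₗ[ℝ] ({ x // x ∈ S k } → ℝ) :=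
      LinearMap.funLeft ℝ ℝ (fun i : { x // x ∈ S k } => (i : Fin N)) with hΦdef
    have hinj : Function.Injective (Φ.comp M.subtype) := by
      rw [← LinearMap.ker_eq_bot, LinearMap.ker_eq_bot']
      intro m hm
      obtain ⟨w, hw, z, hz, hwz⟩ := Submodule.mem_sup.1 m.2
      obtain ⟨c, rfl⟩ := Submodule.mem_span_singleton.1 hz
      have hm' : ∀ i ∈ S k, w i + c * u i = 0 := by
        intro i hi
        have := congrFun hm ⟨i, hi⟩
        simpa [hΦdef, ← hwz, hudef] using this
      have hweq : ∀ i ∈ S k, w i = -c := by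
        intro i hi
        have := hm' i hi
        simp [hudef, hi] at this
        linarith
      have hw0 : w = 0 := by
        by_contra hwne
        obtain ⟨j', hj'⟩ := hPBH k hk w hw hwne
        apply hj'
        rw [hinner k w hw j']
        rw [Finset.sum_congr rfl (fun i hi => by rw [hweq i hi])]
        rw [← Finset.mul_sum, hScolsum k j', mul_zero]
      have hc0 : c = 0 := by
        have := hm' i0 hi0
        simp [hw0, hudef, hi0] at this
        exact this
      have : (m : Fin N → ℝ) = 0 := by rw [← hwz, hw0, hc0]; simp
      exact Subtype.ext this
    have h2 := LinearMap.finrank_le_finrank_of_injective hinj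
    rwa [Module.finrank_fintype_fun_eq_card, Fintype.card_coe] at h2
  -- final counting
  calc ∑ k ∈ Finset.univ.filter (fun k : Fin K => Ω k ≠ ⊥), (Module.finrank ℝ (Ω k) + 1)
      ≤ ∑ k ∈ Finset.univ.filter (fun k : Fin K => Ω k ≠ ⊥), (S k).card := by
        apply Finset.sum_le_sum
        intro k hk
        exact key k (Finset.mem_filter.1 hk).2
    _ = ((Finset.univ.filter (fun k : Fin K => Ω k ≠ ⊥)).biUnion S).card := by
        symm
        apply Finset.card_biUnion
        intro k _ l _ hkl
        exact (hdisj k l hkl).mono (Finset.filter_subset _ _) (Finset.filter_subset _ _)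
    _ ≤ (Finset.univ.filter fun i : Fin N => ∃ j : Fin W, D i j ≠ 0).card := by
        apply Finset.card_le_card
        intro i hi
        obtain ⟨k, _, hik⟩ := Finset.mem_biUnion.1 hi
        exact Finset.mem_filter.2 ⟨Finset.mem_univ i, (Finset.mem_filter.1 hik).2⟩
end

section
/- Assume in addition that A is symmetric (Aᵀ = A). Let v ∈ ℝ^N be an eigenvector of A with A.mulVec v = λ • v for some λ ∈ ℝ, and write v = v_∥ + v_⊥, where v_∥ is the Euclidean orthogonal projection of v onto X_or and v_⊥ := v - v_∥ is orthogonal to X_or. Then A.mulVec v_∥ = λ • v_∥ and A.mulVec v_⊥ = λ • v_⊥; that is, every eigenvector of A splits into a (possibly zero) eigenvector lying in the group-consensus subspace and a (possibly zero) eigenvector orthogonal to it, for the same eigenvalue. -/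
open Matrix

lemma permMat_mulVec_s18 (N : ℕ) (σ : Equiv.Perm (Fin N)) (x : Fin N → ℝ) :
    (permMat N σ).mulVec x = fun i => x (σ⁻¹ i) := by
  funext i
  simp only [permMat, mulVec, dotProduct, of_apply]
  rw [Finset.sum_eq_single (σ⁻¹ i)]
  · simp
  · intro b _ hb
    rw [if_neg, zero_mul]
    intro h; exact hb (by simpa using congrArg σ.symm h)
  · simp

lemma consensus_mulVec (N : ℕ) (A : Matrix (Fin N) (Fin N) ℝ)
    (G : Subgroup (Equiv.Perm (Fin N)))
    (hA : ∀ σ ∈ G, permMat N σ * A = A * permMat N σ)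
    (x : Fin N → ℝ) (hx : x ∈ consensusSet N G) :
    A.mulVec x ∈ consensusSet N G := by
  rintro i j ⟨σ, hσ, hij⟩
  have hcomm := hA σ hσ
  have h := congrFun (congrArg (fun M => M.mulVec x) hcomm) j
  rw [← mulVec_mulVec, ← mulVec_mulVec, permMat_mulVec_s18] at h
  have hfix : (permMat N σ).mulVec x = x := by
    rw [permMat_mulVec_s18]; funext k
    exact (hx (σ⁻¹ k) k ⟨σ, hσ, by simp⟩)
  rw [hfix] at h
  have : σ⁻¹ j = i := by simp [← hij]
  simp only [this] at h
  exact h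

/-- For symmetric `A`, every eigenvector `v` of `A`, written as `v = v_∥ + v_⊥` with `v_∥` the
Euclidean orthogonal projection of `v` onto `X_or` (so `v_∥ ∈ X_or` and `v_⊥ = v - v_∥` is
orthogonal to `X_or`), splits into eigenvectors of the same eigenvalue: `A v_∥ = λ v_∥` and
`A v_⊥ = λ v_⊥`. -/
theorem eigenvector_splits_along_consensus (N : ℕ) (A : Matrix (Fin N) (Fin N) ℝ)
    (G : Subgroup (Equiv.Perm (Fin N)))
    (hA : ∀ σ ∈ G, permMat N σ * A = A * permMat N σ)
    (hsymm : Aᵀ = A)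
    (lam : ℝ) (v vpar : Fin N → ℝ)
    (hv : A.mulVec v = lam • v)
    (hpar : vpar ∈ consensusSet N G)
    (hperp : ∀ x ∈ consensusSet N G, ∑ i, (v - vpar) i * x i = 0) :
    A.mulVec vpar = lam • vpar ∧ A.mulVec (v - vpar) = lam • (v - vpar) := by
  set p := v - vpar with hp
  set w := A.mulVec vpar - lam • vpar with hw
  set u := A.mulVec p - lam • p with hu
  have hsum : w + u = 0 := by
    have : vpar + p = v := by simp [hp]
    have h2 : A.mulVec vpar + A.mulVec p = lam • vpar + lam • p := by
      rw [← mulVec_add, this, hv, ← smul_add, this]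
    rw [hw, hu]; rw [sub_add_sub_comm, h2]; simp
  -- w is in the consensus set
  have hwX : w ∈ consensusSet N G := by
    rintro i j hij
    have h1 := consensus_mulVec N A G hA vpar hpar i j hij
    have h2 := hpar i j hij
    simp only [hw, Pi.sub_apply, Pi.smul_apply, smul_eq_mul, h1, h2]
  -- u is orthogonal to the consensus set
  have huX : ∀ x ∈ consensusSet N G, ∑ i, u i * x i = 0 := by
    intro x hx
    have e1 : ∑ i, (A.mulVec p) i * x i = ∑ i, p i * (A.mulVec x) i := by
      have : A.mulVec p ⬝ᵥ x = p ⬝ᵥ A.mulVec x := by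
        rw [dotProduct_comm, dotProduct_mulVec, ← mulVec_transpose, hsymm,
          dotProduct_comm]
      simpa [dotProduct] using this
    have e2 : ∑ i, p i * (A.mulVec x) i = 0 :=
      hperp (A.mulVec x) (consensus_mulVec N A G hA x hx)
    have e3 : ∑ i, p i * x i = 0 := hperp x hx
    simp only [hu, Pi.sub_apply, Pi.smul_apply, smul_eq_mul, sub_mul]
    rw [Finset.sum_sub_distrib, e1, e2]
    have : ∑ i, lam * p i * x i = lam * ∑ i, p i * x i := by
      rw [Finset.mul_sum]; exact Finset.sum_congr rfl fun i _ => by ring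
    rw [this, e3, mul_zero, sub_zero]
  -- conclude w = 0
  have hw0 : w = 0 := by
    have hWW : ∑ i, w i * w i = 0 := by
      have h1 : ∑ i, (w + u) i * w i = 0 := by rw [hsum]; simp
      have h2 : ∑ i, u i * w i = 0 := huX w hwX
      have : ∑ i, (w i * w i + u i * w i) = 0 := by
        simpa [add_mul] using h1
      rw [Finset.sum_add_distrib, h2, add_zero] at this
      exact this
    funext i
    have := Finset.sum_eq_zero_iff_of_nonneg
      (fun i _ => mul_self_nonneg (w i)) |>.mp hWW i (Finset.mem_univ i)
    exact mul_self_eq_zero.mp this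
  have hu0 : u = 0 := by rwa [hw0, zero_add] at hsum
  constructor
  · exact sub_eq_zero.mp hw0
  · exact sub_eq_zero.mp hu0
end
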